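/- For any inner function Θ₂ on 𝔻 and any f ∈ H² with inner-outer factorization f = θp, the product f · (Θ₂·conj(θzp)/p) equals Θ₂·conj(zp), which lies in (Θ₂H²)^⊥; hence f belongs to the generalized Toeplitz kernel with symbol Θ₂·conj(θzp)/p. -/

import Mathlib

open MeasureTheory Complex Filter ComplexConjugate ENNReal

noncomputable section

/-- The unit circle, modeled as `ℝ/ℤ`. -/
abbrev Tc := UnitAddCircle

/-- The boundary coordinate function `z = e^{2πiθ}`. -/
def zB : Tc → ℂ := fun θ => fourier 1 θ

/-- Boundary Hardy space `H²(𝔻)`: `L²` functions with vanishing negative Fourier coefficients. -/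
def H2 : Set (Tc → ℂ) := {f | MemLp f 2 volume ∧ ∀ n : ℤ, n < 0 → fourierCoeff f n = 0}

/-- Boundary `H^∞(𝔻)`. -/
def Hinf : Set (Tc → ℂ) := {f | MemLp f ⊤ volume ∧ ∀ n : ℤ, n < 0 → fourierCoeff f n = 0}

/-- An inner function: bounded analytic with unimodular boundary values. -/
def IsInnerD (u : Tc → ℂ) : Prop := u ∈ Hinf ∧ ∀ᵐ θ : Tc, ‖u θ‖ = 1

/-- An outer function (boundary values): the radial limit of
`exp(∫ (ζ+z)/(ζ-z) w(ζ) dm(ζ))` for some integrable real `w` (namely `w = log|f|`). -/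
def IsOuterD (p : Tc → ℂ) : Prop :=
  ∃ w : Tc → ℝ, Integrable w volume ∧ ∃ F : ℂ → ℂ,
    (∀ z ∈ Metric.ball (0:ℂ) 1,
      F z = Complex.exp (∫ ζ : Tc, ((fourier 1 ζ + z) / (fourier 1 ζ - z)) * (w ζ : ℂ))) ∧
    (∀ᵐ θ : Tc, Tendsto (fun r : ℝ => F ((r : ℂ) * fourier 1 θ))
      (nhdsWithin 1 (Set.Iio 1)) (nhds (p θ)))

/-- The Nevanlinna–Smirnov class `N`: quotients `G/F` with `G, F ∈ H^∞`, `F` outer,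
identified with boundary values. -/
def SmirnovD : Set (Tc → ℂ) :=
  {u | ∃ G F : Tc → ℂ, G ∈ Hinf ∧ F ∈ Hinf ∧ IsOuterD F ∧ ∀ᵐ θ : Tc, u θ * F θ = G θ}

/-- The set of complex conjugates of the Smirnov class, `conj(N)`. -/
def ConjSmirnovD : Set (Tc → ℂ) := {u | ∃ v ∈ SmirnovD, ∀ᵐ θ : Tc, u θ = conj (v θ)}

/-- A nonzero essentially bounded symbol. -/
def SymbOk (g : Tc → ℂ) : Prop := MemLp g ⊤ volume ∧ ¬ (∀ᵐ θ : Tc, g θ = 0)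

/-- The generalized Toeplitz kernel `ker T_g^{E₁,E₂} = {f ∈ E₁ : gf ⊥ E₂}`. -/
def gkerD (g : Tc → ℂ) (E₁ E₂ : Set (Tc → ℂ)) : Set (Tc → ℂ) :=
  {f | f ∈ E₁ ∧ ∀ e ∈ E₂, (∫ θ : Tc, g θ * f θ * conj (e θ)) = 0}

/-- `K` is a generalized Toeplitz kernel relative to `(E₁, E₂)`. -/
def IsGTKD (E₁ E₂ K : Set (Tc → ℂ)) : Prop := ∃ g : Tc → ℂ, SymbOk g ∧ K = gkerD g E₁ E₂

/-- `K` is the minimal generalized Toeplitz kernel containing `k`. -/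
def IsMinKerD (E₁ E₂ K : Set (Tc → ℂ)) (k : Tc → ℂ) : Prop :=
  IsGTKD E₁ E₂ K ∧ k ∈ K ∧ ∀ K', IsGTKD E₁ E₂ K' → k ∈ K' → K ⊆ K'

/-- `k` is a maximal vector for `ker T_g^{E₁,E₂}`. -/
def IsMaxVecD (g : Tc → ℂ) (E₁ E₂ : Set (Tc → ℂ)) (k : Tc → ℂ) : Prop :=
  IsMinKerD E₁ E₂ (gkerD g E₁ E₂) k

/-- A closed subspace of `H²`. -/
def ClosedSub (E : Set (Tc → ℂ)) : Prop :=
  E ⊆ H2 ∧ (0 : Tc → ℂ) ∈ E ∧ (∀ f ∈ E, ∀ g ∈ E, f + g ∈ E) ∧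
  (∀ c : ℂ, ∀ f ∈ E, c • f ∈ E) ∧
  ∀ f ∈ H2, (∀ ε : ℝ, 0 < ε → ∃ g ∈ E, eLpNorm (f - g) 2 volume < ENNReal.ofReal ε) → f ∈ E

/-- The shift-invariant subspace `Θ·H²`. -/
def shiftSet (Θ : Tc → ℂ) : Set (Tc → ℂ) := (fun h => Θ * h) '' H2

/-- The multiplier space `M(X, Y) = {w : wX ⊆ Y}` (boundary multiplication). -/
def MultD (X Y : Set (Tc → ℂ)) : Set (Tc → ℂ) := {w | ∀ f ∈ X, w * f ∈ Y}

/-- A nontrivial set of functions: contains an element not a.e. zero. -/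
def NontrivD (K : Set (Tc → ℂ)) : Prop := ∃ f ∈ K, ¬ (∀ᵐ θ : Tc, f θ = 0)

/-!
Since `|θf| = 1` a.e., `θf p · Θ₂ conj(θf z p)/p = Θ₂ conj(z p)` pointwise (both sides vanish
where `p` does). For `e = Θ₂ h` with `h ∈ H²`, `|Θ₂| = 1` turns `⟨Θ₂ conj(z p), e⟩` into
`conj ∫ z p h`, the conjugate of the `(-1)`-st Fourier coefficient of `p h`. By the polarised
Parseval identity, the Fourier coefficients of a product of two `H²` functions are convolutions
of their coefficient sequences, so they vanish at negative frequencies.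
-/

open AddCircle

theorem hasSum_conj_fourierCoeff_mul_fourierCoeff {T : ℝ} [Fact (0 < T)]
    {f g : AddCircle T → ℂ} (hf : MemLp f 2 haarAddCircle) (hg : MemLp g 2 haarAddCircle) :
    HasSum (fun n => conj (fourierCoeff f n) * fourierCoeff g n)
      (∫ t, conj (f t) * g t ∂haarAddCircle) := by
  have hcoeff {u : AddCircle T → ℂ} (hu : MemLp u 2 haarAddCircle) (n : ℤ) :
      inner ℂ (fourierBasis n) (hu.toLp u) = fourierCoeff u n := by
    rw [← HilbertBasis.repr_apply_apply, fourierBasis_repr, fourierCoeff_congr_ae hu.coeFn_toLp]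
  have hint : ∫ t, conj (f t) * g t ∂haarAddCircle = inner ℂ (hf.toLp f) (hg.toLp g) := by
    rw [L2.inner_def]
    apply integral_congr_ae
    filter_upwards [hf.coeFn_toLp, hg.coeFn_toLp] with t hft hgt
    rw [hft, hgt, RCLike.inner_apply, mul_comm]
  simp_rw [hint, ← hcoeff hf, ← hcoeff hg, inner_conj_symm]
  exact fourierBasis.hasSum_inner_mul_inner _ _

theorem fourierCoeff_fourier_mul_conj {T : ℝ} [Fact (0 < T)] (f : AddCircle T → ℂ) (n m : ℤ) :
    fourierCoeff (fun t => fourier n t * conj (f t)) m = conj (fourierCoeff f (n - m)) := by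
  simp only [fourierCoeff, ← integral_conj, smul_eq_mul, map_mul, neg_sub]
  congr 1 with t
  rw [← fourier_neg, ← mul_assoc, ← fourier_add]
  congr 3; ring

theorem MeasureTheory.MemLp.fourier_mul_conj {T : ℝ} [Fact (0 < T)] {f : AddCircle T → ℂ}
    {μ : Measure (AddCircle T)} (hf : MemLp f 2 μ) (n : ℤ) :
    MemLp (fun t => fourier n t * conj (f t)) 2 μ :=
  hf.of_le (((map_continuous (fourier n)).aestronglyMeasurable).mul
      (RCLike.continuous_conj.comp_aestronglyMeasurable hf.1))
    (Eventually.of_forall fun t => by simp [Circle.norm_coe])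

theorem fourierCoeff_mul_eq_zero_of_mem_H2 {f g : Tc → ℂ} (hf : f ∈ H2) (hg : g ∈ H2) {n : ℤ}
    (hn : n < 0) : fourierCoeff (f * g) n = 0 := by
  have hparseval := hasSum_conj_fourierCoeff_mul_fourierCoeff
    (hf.1.haarAddCircle.fourier_mul_conj n) hg.1.haarAddCircle
  have hterms : ∀ m, conj (fourierCoeff (fun t => fourier n t * conj (f t)) m) *
      fourierCoeff g m = 0 := by
    intro m
    rw [fourierCoeff_fourier_mul_conj, conj_conj]
    rcases lt_or_ge m 0 with hm | hm
    · rw [hg.2 m hm, mul_zero]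
    · rw [hf.2 (n - m) (by omega), zero_mul]
  simp only [hterms, map_mul, conj_conj] at hparseval
  rw [← hparseval.unique hasSum_zero, fourierCoeff]
  congr 1 with t
  rw [← fourier_neg, smul_eq_mul, Pi.mul_apply, mul_assoc]

theorem IsInnerD.mul_conj_self {u : Tc → ℂ} (hu : IsInnerD u) :
    ∀ᵐ θ : Tc, u θ * conj (u θ) = 1 := by
  filter_upwards [hu.2] with θ hθ
  rw [mul_conj, normSq_eq_norm_sq, hθ]
  norm_num

theorem integral_mul_conj_zB_mul_mul_conj_eq_zero {Θ p e : Tc → ℂ} (hΘ : IsInnerD Θ)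
    (hp : p ∈ H2) (he : e ∈ shiftSet Θ) :
    ∫ θ : Tc, Θ θ * conj (zB θ * p θ) * conj (e θ) = 0 := by
  obtain ⟨h, hh, rfl⟩ := he
  have hvolume : (volume : Measure Tc) = haarAddCircle := by
    simp [volume_eq_smul_haarAddCircle]
  have hintegrand : (fun θ => Θ θ * conj (zB θ * p θ) * conj ((Θ * h) θ))
      =ᵐ[volume] fun θ => conj (fourier (-(-1)) θ • (p * h) θ) := by
    filter_upwards [hΘ.mul_conj_self] with θ hθ
    simp only [Pi.mul_apply, map_mul, neg_neg, smul_eq_mul, zB]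
    linear_combination (conj (fourier 1 θ) * conj (p θ) * conj (h θ)) * hθ
  rw [integral_congr_ae hintegrand, integral_conj, hvolume, ← fourierCoeff,
    fourierCoeff_mul_eq_zero_of_mem_H2 hp hh (by norm_num), map_zero]

theorem mem_gkerD_of_ae_mul_eq {g f k : Tc → ℂ} {E₁ E₂ : Set (Tc → ℂ)} (hf : f ∈ E₁)
    (hfg : ∀ᵐ θ : Tc, f θ * g θ = k θ) (hk : ∀ e ∈ E₂, ∫ θ : Tc, k θ * conj (e θ) = 0) :
    f ∈ gkerD g E₁ E₂ := by
  refine ⟨hf, fun e he => ?_⟩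
  rw [← hk e he]
  refine integral_congr_ae ?_
  filter_upwards [hfg] with θ hθ
  rw [← hθ, mul_comm (g θ)]

theorem stmt16_general (Θ₂ θf p f : Tc → ℂ) (hΘ₂ : IsInnerD Θ₂) (hf : f ∈ H2) (hθ : IsInnerD θf)
    (hpH : p ∈ H2)
    (hfact : ∀ᵐ θ : Tc, f θ = θf θ * p θ) :
    (∀ᵐ θ : Tc, f θ * (Θ₂ θ * conj (θf θ * zB θ * p θ) / p θ) = Θ₂ θ * conj (zB θ * p θ)) ∧
    (∀ e ∈ shiftSet Θ₂, (∫ θ : Tc, (Θ₂ θ * conj (zB θ * p θ)) * conj (e θ)) = 0) ∧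
    f ∈ gkerD (fun θ => Θ₂ θ * conj (θf θ * zB θ * p θ) / p θ) H2 (shiftSet Θ₂) := by
  have hproduct : ∀ᵐ θ : Tc,
      f θ * (Θ₂ θ * conj (θf θ * zB θ * p θ) / p θ) = Θ₂ θ * conj (zB θ * p θ) := by
    filter_upwards [hfact, hθ.mul_conj_self] with θ hfθ hθθ
    rw [hfθ]
    by_cases hp0 : p θ = 0
    · simp [hp0]
    · field_simp
      simp only [map_mul]
      linear_combination (Θ₂ θ * conj (zB θ) * conj (p θ)) * hθθ
  have horth : ∀ e ∈ shiftSet Θ₂, ∫ θ : Tc, Θ₂ θ * conj (zB θ * p θ) * conj (e θ) = 0 :=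
    fun e he => integral_mul_conj_zB_mul_mul_conj_eq_zero hΘ₂ hpH he
  exact ⟨hproduct, horth, mem_gkerD_of_ae_mul_eq hf hproduct horth⟩

/-- For inner `Θ₂` and `f = θp ∈ H²`, the product `f · (Θ₂·conj(θzp)/p)` equals
`Θ₂·conj(zp)`, which is orthogonal to `Θ₂H²`; hence `f` lies in the generalized Toeplitz
kernel with symbol `Θ₂·conj(θzp)/p`. -/
theorem stmt16 (Θ₂ θf p f : Tc → ℂ) (hΘ₂ : IsInnerD Θ₂) (hf : f ∈ H2) (hθ : IsInnerD θf)
    (hpo : IsOuterD p) (hpH : p ∈ H2)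
    (hfact : ∀ᵐ θ : Tc, f θ = θf θ * p θ) :
    (∀ᵐ θ : Tc, f θ * (Θ₂ θ * conj (θf θ * zB θ * p θ) / p θ) = Θ₂ θ * conj (zB θ * p θ)) ∧
    (∀ e ∈ shiftSet Θ₂, (∫ θ : Tc, (Θ₂ θ * conj (zB θ * p θ)) * conj (e θ)) = 0) ∧
    f ∈ gkerD (fun θ => Θ₂ θ * conj (θf θ * zB θ * p θ) / p θ) H2 (shiftSet Θ₂) :=
  stmt16_general Θ₂ θf p f hΘ₂ hf hθ hpH hfact
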